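/- Let 0 < α < 1, λ > 0, κ > 0, β > 1 and c > 0, and set υ = (1−β)/(β(1−α)), so that ((1−α)υ + 1)β − 1 = 0. Let H(x) = c x^β for x ≥ 0 and H(x) = 0 for x ≤ 0, and take f ≡ 1. For γ > 0, let r_γ : [0,∞) → ℝ be the continuous solution of r_γ(t) = H(κ ∫₀ᵗ λ⁻¹ (t−s)^{−α} (γ − r_γ(s)) ds), and let r₁ be the continuous solution for γ = 1. Then for every γ > 0 and every t ≥ 0, r_γ(t) = γ r₁(γ^{−υ} t). -/

import Mathlib

/-!
Substituting `s = a u` with `a = γ^(-υ)` shows that `t ↦ γ r₁(a t)` solves the equation for `γ`: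
the kernel contributes the factor `a^(α-1)`, the forcing the factor `γ`, and the
`β`-homogeneity of `H` turns `(a^(α-1) γ)^β` into `γ` exactly by the choice of `υ`.

It remains to see that the equation has at most one continuous solution. `H` is convex, hence
locally Lipschitz, so two solutions `p, q` satisfy `d t ≤ C ∫₀ᵗ (t-s)^(-α) d s ds` on `[0, T]`
for `d = |p - q|`. If `d` vanishes on `[0, m]`, then on `[0, m + δ]` with
`C δ^(1-α) / (1-α) < 1` the maximum of `d` is bounded by a fraction of itself, so `d` vanishes
there too; finitely many such steps cover `[0, T]`.
-/

open MeasureTheory Set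

section AbelKernel

variable {α : ℝ}

lemma intervalIntegrable_sub_rpow_neg_mul (hα : α < 1) {ψ : ℝ → ℝ} {a b : ℝ}
    (hψ : ContinuousOn ψ (uIcc a b)) (t : ℝ) :
    IntervalIntegrable (fun s => (t - s) ^ (-α) * ψ s) volume a b := by
  have hker : IntervalIntegrable (fun s => (t - s) ^ (-α)) volume a b := by
    simpa using (intervalIntegral.intervalIntegrable_rpow' (a := t - a) (b := t - b)
      (by linarith : -1 < -α)).comp_sub_left t
  exact hker.mul_continuousOn hψ

lemma integral_sub_rpow_neg (hα : α < 1) (m t : ℝ) :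
    ∫ s in m..t, (t - s) ^ (-α) = (t - m) ^ (1 - α) / (1 - α) := by
  rw [intervalIntegral.integral_comp_sub_left (fun x => x ^ (-α)) t, sub_self,
    integral_rpow (Or.inl (by linarith)), Real.zero_rpow (by linarith)]
  ring_nf

lemma abs_integral_sub_rpow_neg_mul_le {ψ : ℝ → ℝ} {m t : ℝ} (hmt : m ≤ t) :
    |∫ s in m..t, (t - s) ^ (-α) * ψ s| ≤ ∫ s in m..t, (t - s) ^ (-α) * |ψ s| := by
  refine (intervalIntegral.abs_integral_le_integral_abs hmt).trans_eq
    (intervalIntegral.integral_congr fun s hs => ?_)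
  rw [uIcc_of_le hmt] at hs
  simp only [abs_mul, abs_of_nonneg (Real.rpow_nonneg (sub_nonneg.2 hs.2) _)]

lemma abs_integral_sub_rpow_neg_mul_le_of_abs_le (hα : α < 1) {ψ : ℝ → ℝ} {m t D : ℝ}
    (hmt : m ≤ t) (hψ : ContinuousOn ψ (Icc m t)) (hD : ∀ s ∈ Icc m t, |ψ s| ≤ D) :
    |∫ s in m..t, (t - s) ^ (-α) * ψ s| ≤ D * ((t - m) ^ (1 - α) / (1 - α)) := by
  rw [← uIcc_of_le hmt] at hψ
  calc |∫ s in m..t, (t - s) ^ (-α) * ψ s|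
      ≤ ∫ s in m..t, (t - s) ^ (-α) * |ψ s| := abs_integral_sub_rpow_neg_mul_le hmt
    _ ≤ ∫ s in m..t, (t - s) ^ (-α) * D :=
        intervalIntegral.integral_mono_on hmt
          (intervalIntegrable_sub_rpow_neg_mul hα hψ.abs t)
          (intervalIntegrable_sub_rpow_neg_mul hα continuousOn_const t) fun s hs =>
            mul_le_mul_of_nonneg_left (hD s hs) (Real.rpow_nonneg (sub_nonneg.2 hs.2) _)
    _ = D * ((t - m) ^ (1 - α) / (1 - α)) := by
        rw [intervalIntegral.integral_mul_const, integral_sub_rpow_neg hα, mul_comm]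

lemma integral_sub_rpow_neg_mul_comp_mul (ψ : ℝ → ℝ) {a t : ℝ} (ha : 0 < a) (ht : 0 ≤ t) :
    ∫ s in (0:ℝ)..t, (t - s) ^ (-α) * ψ (a * s)
      = a ^ (α - 1) * ∫ v in (0:ℝ)..a * t, (a * t - v) ^ (-α) * ψ v := by
  have hscale : ∀ s ∈ uIcc 0 t, (t - s) ^ (-α) * ψ (a * s)
      = a ^ α * ((a * t - a * s) ^ (-α) * ψ (a * s)) := by
    intro s hs
    rw [uIcc_of_le ht] at hs
    rw [← mul_sub, Real.mul_rpow ha.le (sub_nonneg.2 hs.2), Real.rpow_neg ha.le,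
      ← mul_assoc, ← mul_assoc, mul_inv_cancel₀ (Real.rpow_pos_of_pos ha α).ne', one_mul]
  rw [intervalIntegral.integral_congr hscale, intervalIntegral.integral_const_mul,
    intervalIntegral.integral_comp_mul_left (fun v => (a * t - v) ^ (-α) * ψ v) ha.ne',
    mul_zero, smul_eq_mul, ← mul_assoc, Real.rpow_sub_one ha.ne', div_eq_mul_inv]

variable {C T : ℝ} {d : ℝ → ℝ}

lemma eqOn_zero_of_le_integral_sub_rpow_neg_mul_step (hα : α < 1) (hC : 0 ≤ C)
    (hd : ContinuousOn d (Icc 0 T)) (hd0 : ∀ t ∈ Icc 0 T, 0 ≤ d t)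
    (hle : ∀ t ∈ Icc 0 T, d t ≤ C * ∫ s in (0:ℝ)..t, (t - s) ^ (-α) * d s)
    {m δ : ℝ} (hm : 0 ≤ m) (hδ : C * (δ ^ (1 - α) / (1 - α)) < 1)
    (hzero : EqOn d 0 (Icc 0 (min m T))) :
    EqOn d 0 (Icc 0 (min (m + δ) T)) := by
  intro t ht
  show d t = 0
  have hsub : Icc 0 (min (m + δ) T) ⊆ Icc 0 T := Icc_subset_Icc_right (min_le_right _ _)
  obtain ⟨z, hz, hzmax⟩ := isCompact_Icc.exists_isMaxOn ⟨t, ht⟩ (hd.mono hsub)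
  suffices d z = 0 from le_antisymm (this ▸ hzmax ht) (hd0 t (hsub ht))
  rcases le_or_gt z m with hzm | hmz
  · exact hzero ⟨hz.1, le_min hzm (hz.2.trans (min_le_right _ _))⟩
  have hzT : z ≤ T := hz.2.trans (min_le_right _ _)
  have hdz : ContinuousOn d (Icc 0 z) := hd.mono (Icc_subset_Icc_right hzT)
  have hkd : ∀ a b, a ∈ Icc 0 z → b ∈ Icc 0 z →
      IntervalIntegrable (fun s => (z - s) ^ (-α) * d s) volume a b := fun a b ha hb =>
    intervalIntegrable_sub_rpow_neg_mul hα (hdz.mono (uIcc_subset_Icc ha hb)) z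
  have hinit : ∫ s in (0:ℝ)..m, (z - s) ^ (-α) * d s = 0 := by
    refine (intervalIntegral.integral_congr (g := fun _ => 0) fun s hs => ?_).trans
      intervalIntegral.integral_zero
    rw [uIcc_of_le hm] at hs
    simp [show d s = 0 from hzero ⟨hs.1, le_min hs.2 (by linarith [hs.2])⟩]
  have hbound : ∫ s in (0:ℝ)..z, (z - s) ^ (-α) * d s ≤ d z * ((z - m) ^ (1 - α) / (1 - α)) := by
    rw [← intervalIntegral.integral_add_adjacent_intervals (hkd 0 m ⟨le_rfl, hz.1⟩ ⟨hm, hmz.le⟩)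
      (hkd m z ⟨hm, hmz.le⟩ ⟨hz.1, le_rfl⟩), hinit, zero_add]
    refine (le_abs_self _).trans (abs_integral_sub_rpow_neg_mul_le_of_abs_le hα hmz.le
      (hdz.mono (Icc_subset_Icc_left hm)) fun s hs => ?_)
    have hs' : s ∈ Icc 0 (min (m + δ) T) := ⟨hm.trans hs.1, hs.2.trans hz.2⟩
    rw [abs_of_nonneg (hd0 s (hsub hs'))]
    exact hzmax hs'
  have hlen : (z - m) ^ (1 - α) ≤ δ ^ (1 - α) :=
    Real.rpow_le_rpow (by linarith) (by linarith [hz.2, min_le_left (m + δ) T]) (by linarith)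
  have : d z ≤ C * (δ ^ (1 - α) / (1 - α)) * d z := calc
    d z ≤ C * (d z * ((z - m) ^ (1 - α) / (1 - α))) :=
      (hle z ⟨hz.1, hzT⟩).trans (mul_le_mul_of_nonneg_left hbound hC)
    _ ≤ C * (d z * (δ ^ (1 - α) / (1 - α))) := by
      gcongr
      exact hd0 z ⟨hz.1, hzT⟩
    _ = C * (δ ^ (1 - α) / (1 - α)) * d z := by ring
  nlinarith [hd0 z ⟨hz.1, hzT⟩]

lemma eqOn_zero_of_le_integral_sub_rpow_neg_mul (hα : α < 1) (hC : 0 ≤ C)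
    (hd : ContinuousOn d (Icc 0 T)) (hd0 : ∀ t ∈ Icc 0 T, 0 ≤ d t)
    (hle : ∀ t ∈ Icc 0 T, d t ≤ C * ∫ s in (0:ℝ)..t, (t - s) ^ (-α) * d s) :
    EqOn d 0 (Icc 0 T) := by
  have hcont : ContinuousAt (fun δ : ℝ => C * (δ ^ (1 - α) / (1 - α))) 0 :=
    continuousAt_const.mul ((Real.continuousAt_rpow_const _ _ (Or.inr (by linarith))).div_const _)
  have hsmall : C * ((0:ℝ) ^ (1 - α) / (1 - α)) < 1 := by
    simp [Real.zero_rpow (by linarith : 1 - α ≠ 0)]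
  obtain ⟨δ, hδ, hδpos⟩ := ((hcont.eventually (gt_mem_nhds hsmall)).filter_mono
    nhdsWithin_le_nhds |>.and (self_mem_nhdsWithin (s := Ioi 0))).exists
  have hsteps : ∀ n : ℕ, EqOn d 0 (Icc 0 (min (n * δ) T)) := by
    intro n
    induction n with
    | zero =>
      intro t ht
      have ht0 : t = 0 := le_antisymm (ht.2.trans (by simp)) ht.1
      subst ht0
      exact le_antisymm (by simpa using hle 0 ⟨le_rfl, ht.2.trans (min_le_right _ _)⟩)
        (hd0 0 ⟨le_rfl, ht.2.trans (min_le_right _ _)⟩)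
    | succ n ih =>
      have hmin : min (min (n * δ) T) T = min (n * δ) T := by rw [min_assoc, min_self]
      intro t ht
      have htT : t ≤ T := ht.2.trans (min_le_right _ _)
      have htn : t ≤ n * δ + δ := by push_cast at ht; linarith [ht.2.trans (min_le_left _ _)]
      refine eqOn_zero_of_le_integral_sub_rpow_neg_mul_step hα hC hd hd0 hle
        (le_min (by positivity) (ht.1.trans htT)) hδ (hmin ▸ ih)
        ⟨ht.1, le_min ?_ htT⟩
      rw [← min_add_add_right]
      exact le_min htn (by linarith)
  obtain ⟨n, hn⟩ := exists_nat_ge (T / δ)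
  intro t ht
  exact hsteps n ⟨ht.1, le_min (ht.2.trans ((div_le_iff₀ hδpos).1 hn)) ht.2⟩

end AbelKernel

noncomputable def impactIntegral (α lam κ γ : ℝ) (r : ℝ → ℝ) (t : ℝ) : ℝ :=
  κ * ∫ s in (0:ℝ)..t, lam⁻¹ * (t - s) ^ (-α) * (γ - r s)

section ImpactIntegral

variable {α lam κ γ : ℝ}

lemma impactIntegral_eq (r : ℝ → ℝ) (t : ℝ) :
    impactIntegral α lam κ γ r t = κ * lam⁻¹ * ∫ s in (0:ℝ)..t, (t - s) ^ (-α) * (γ - r s) := by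
  simp only [impactIntegral, mul_assoc, intervalIntegral.integral_const_mul]

lemma abs_impactIntegral_le (hα : α < 1) {r : ℝ → ℝ} {B T : ℝ} (hr : ContinuousOn r (Icc 0 T))
    (hB : ∀ s ∈ Icc 0 T, |r s| ≤ B) {t : ℝ} (ht : t ∈ Icc 0 T) :
    |impactIntegral α lam κ γ r t| ≤ |κ * lam⁻¹| * ((|γ| + B) * (T ^ (1 - α) / (1 - α))) := by
  have hsub : Icc 0 t ⊆ Icc 0 T := Icc_subset_Icc_right ht.2
  rw [impactIntegral_eq, abs_mul]
  gcongr
  calc |∫ s in (0:ℝ)..t, (t - s) ^ (-α) * (γ - r s)|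
      ≤ (|γ| + B) * ((t - 0) ^ (1 - α) / (1 - α)) :=
        abs_integral_sub_rpow_neg_mul_le_of_abs_le hα ht.1
          (continuousOn_const.sub (hr.mono hsub)) fun s hs =>
            (abs_sub _ _).trans (by linarith [hB s (hsub hs)])
    _ ≤ (|γ| + B) * (T ^ (1 - α) / (1 - α)) := by
        have hB0 : 0 ≤ B := (abs_nonneg _).trans (hB t ht)
        have : 0 < 1 - α := by linarith
        gcongr
        · linarith [ht.1]
        · linarith [ht.2]

lemma abs_impactIntegral_sub_le (hα : α < 1) {p q : ℝ → ℝ} {t : ℝ} (ht : 0 ≤ t)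
    (hp : ContinuousOn p (Icc 0 t)) (hq : ContinuousOn q (Icc 0 t)) :
    |impactIntegral α lam κ γ p t - impactIntegral α lam κ γ q t|
      ≤ |κ * lam⁻¹| * ∫ s in (0:ℝ)..t, (t - s) ^ (-α) * |p s - q s| := by
  rw [← uIcc_of_le ht] at hp hq
  have hγp : ContinuousOn (fun s => γ - p s) (uIcc 0 t) := continuousOn_const.sub hp
  have hγq : ContinuousOn (fun s => γ - q s) (uIcc 0 t) := continuousOn_const.sub hq
  rw [impactIntegral_eq, impactIntegral_eq, ← mul_sub, ← intervalIntegral.integral_sub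
    (intervalIntegrable_sub_rpow_neg_mul hα hγp t) (intervalIntegrable_sub_rpow_neg_mul hα hγq t),
    abs_mul]
  gcongr
  calc |∫ s in (0:ℝ)..t, ((t - s) ^ (-α) * (γ - p s) - (t - s) ^ (-α) * (γ - q s))|
      = |∫ s in (0:ℝ)..t, (t - s) ^ (-α) * (q s - p s)| := by
        congr 1; exact intervalIntegral.integral_congr fun s _ => by ring
    _ ≤ ∫ s in (0:ℝ)..t, (t - s) ^ (-α) * |q s - p s| := abs_integral_sub_rpow_neg_mul_le ht
    _ = ∫ s in (0:ℝ)..t, (t - s) ^ (-α) * |p s - q s| := by simp only [abs_sub_comm]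

theorem eqOn_of_eq_impactIntegral (hα : α < 1) {H : ℝ → ℝ} (hH : LocallyLipschitz H)
    {p q : ℝ → ℝ} (hp_cont : ContinuousOn p (Ici 0)) (hq_cont : ContinuousOn q (Ici 0))
    (hp : ∀ t, 0 ≤ t → p t = H (impactIntegral α lam κ γ p t))
    (hq : ∀ t, 0 ≤ t → q t = H (impactIntegral α lam κ γ q t)) :
    EqOn p q (Ici 0) := by
  intro T hT
  have hpT : ContinuousOn p (Icc 0 T) := hp_cont.mono Icc_subset_Ici_self
  have hqT : ContinuousOn q (Icc 0 T) := hq_cont.mono Icc_subset_Ici_self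
  obtain ⟨Bp, hBp⟩ := isCompact_Icc.exists_bound_of_continuousOn hpT
  obtain ⟨Bq, hBq⟩ := isCompact_Icc.exists_bound_of_continuousOn hqT
  set A := |κ * lam⁻¹| * ((|γ| + max Bp Bq) * (T ^ (1 - α) / (1 - α)))
  have harg : ∀ r : ℝ → ℝ, ContinuousOn r (Icc 0 T) → (∀ s ∈ Icc 0 T, |r s| ≤ max Bp Bq) →
      ∀ t ∈ Icc 0 T, impactIntegral α lam κ γ r t ∈ Icc (-A) A := fun r hr hB t ht =>
    abs_le.1 (abs_impactIntegral_le hα hr hB ht)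
  obtain ⟨K, hK⟩ := hH.locallyLipschitzOn.exists_lipschitzOnWith_of_compact isCompact_Icc
    (s := Icc (-A) A)
  have hle : ∀ t ∈ Icc 0 T, |p t - q t|
      ≤ K * |κ * lam⁻¹| * ∫ s in (0:ℝ)..t, (t - s) ^ (-α) * |p s - q s| := by
    intro t ht
    rw [hp t ht.1, hq t ht.1, mul_assoc, ← Real.dist_eq]
    refine (hK.dist_le_mul _ (harg p hpT (fun s hs => (hBp s hs).trans (le_max_left _ _)) t ht) _
      (harg q hqT (fun s hs => (hBq s hs).trans (le_max_right _ _)) t ht)).trans ?_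
    rw [Real.dist_eq]
    exact mul_le_mul_of_nonneg_left (abs_impactIntegral_sub_le hα ht.1
      (hpT.mono (Icc_subset_Icc_right ht.2)) (hqT.mono (Icc_subset_Icc_right ht.2))) K.2
  have hzero := eqOn_zero_of_le_integral_sub_rpow_neg_mul hα (by positivity) (hpT.sub hqT).abs
    (fun t _ => abs_nonneg _) hle ⟨hT, le_rfl⟩
  exact sub_eq_zero.1 (abs_eq_zero.1 hzero)

lemma impactIntegral_comp_mul (r : ℝ → ℝ) {a t : ℝ} (ha : 0 < a) (ht : 0 ≤ t) :
    impactIntegral α lam κ γ (fun s => γ * r (a * s)) t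
      = a ^ (α - 1) * γ * impactIntegral α lam κ 1 r (a * t) := by
  have hfactor : ∫ s in (0:ℝ)..t, (t - s) ^ (-α) * (γ - γ * r (a * s))
      = γ * ∫ s in (0:ℝ)..t, (t - s) ^ (-α) * (1 - r (a * s)) := by
    rw [← intervalIntegral.integral_const_mul]
    exact intervalIntegral.integral_congr fun s _ => by ring
  rw [impactIntegral_eq, impactIntegral_eq, hfactor,
    integral_sub_rpow_neg_mul_comp_mul (fun v => 1 - r v) ha ht]
  ring

end ImpactIntegral

section PowerNonlinearity

variable {c β : ℝ}

lemma ite_mul_rpow_eq_mul_max_rpow (hβ : β ≠ 0) (x : ℝ) :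
    (if 0 ≤ x then c * x ^ β else 0) = c * max x 0 ^ β := by
  split_ifs with hx
  · rw [max_eq_left hx]
  · rw [max_eq_right (le_of_not_ge hx), Real.zero_rpow hβ, mul_zero]

lemma locallyLipschitz_mul_max_rpow (hc : 0 ≤ c) (hβ : 1 ≤ β) :
    LocallyLipschitz fun x : ℝ => c * max x 0 ^ β := by
  have hmax : ConvexOn ℝ univ fun x : ℝ => max x 0 :=
    (convexOn_id convex_univ).sup (convexOn_const 0 convex_univ)
  have himage : (fun x : ℝ => max x 0) '' univ = Ici 0 := by
    ext y
    simp only [image_univ, mem_range, mem_Ici]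
    exact ⟨fun ⟨x, hx⟩ => hx ▸ le_max_right x 0, fun hy => ⟨y, max_eq_left hy⟩⟩
  have hpow : ConvexOn ℝ univ fun x : ℝ => max x 0 ^ β :=
    (himage ▸ convexOn_rpow hβ).comp hmax
      (himage ▸ Real.monotoneOn_rpow_Ici_of_exponent_nonneg (by linarith))
  exact (hpow.smul hc).locallyLipschitz

lemma mul_max_mul_rpow {k : ℝ} (hk : 0 ≤ k) (x : ℝ) :
    c * max (k * x) 0 ^ β = k ^ β * (c * max x 0 ^ β) := by
  have hmax : max (k * x) 0 = k * max x 0 := by rw [mul_max_of_nonneg _ _ hk, mul_zero]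
  rw [hmax, Real.mul_rpow hk (le_max_right x 0)]
  ring

end PowerNonlinearity

lemma scaling_factor_rpow {α β γ : ℝ} (hα : α ≠ 1) (hβ : β ≠ 0) (hγ : 0 < γ) :
    ((γ ^ (-((1 - β) / (β * (1 - α))))) ^ (α - 1) * γ) ^ β = γ := by
  have hexp : (-((1 - β) / (β * (1 - α))) * (α - 1) + 1) * β = 1 := by
    field_simp [sub_ne_zero.2 hα.symm]
    ring
  rw [← Real.rpow_mul hγ.le, ← Real.rpow_add_one hγ.ne', ← Real.rpow_mul hγ.le, hexp,
    Real.rpow_one]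

theorem stmt_14_general
    (α lam κ β c : ℝ) (hα1 : α < 1)
    (hβ : 1 < β) (hc : 0 < c)
    (υ : ℝ) (hυ : υ = (1 - β) / (β * (1 - α)))
    (H : ℝ → ℝ) (hH : ∀ x : ℝ, H x = if 0 ≤ x then c * x ^ β else 0)
    (r : ℝ → ℝ → ℝ)
    (hr_cont : ∀ γ, 0 < γ → ContinuousOn (r γ) (Ici 0))
    (hr_eq : ∀ γ, 0 < γ → ∀ t, 0 ≤ t →
      r γ t = H (κ * ∫ s in (0:ℝ)..t, lam⁻¹ * (t - s) ^ (-α) * (γ - r γ s))) :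
    ∀ γ, 0 < γ → ∀ t, 0 ≤ t → r γ t = γ * r 1 (γ ^ (-υ) * t) := by
  obtain rfl : H = fun x => c * max x 0 ^ β :=
    funext fun x => (hH x).trans (ite_mul_rpow_eq_mul_max_rpow (by linarith) x)
  intro γ hγ t ht
  set a := γ ^ (-υ) with ha_def
  have ha : 0 < a := Real.rpow_pos_of_pos hγ _
  have hfactor : (a ^ (α - 1) * γ) ^ β = γ := by
    rw [ha_def, hυ]
    exact scaling_factor_rpow (by linarith) (by linarith) hγ
  have hscaled_cont : ContinuousOn (fun s => γ * r 1 (a * s)) (Ici 0) :=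
    continuousOn_const.mul ((hr_cont 1 one_pos).comp (continuous_const_mul a).continuousOn
      fun s hs => mul_nonneg ha.le hs)
  have hscaled : ∀ s, 0 ≤ s → γ * r 1 (a * s)
      = c * max (impactIntegral α lam κ γ (fun s => γ * r 1 (a * s)) s) 0 ^ β := by
    intro s hs
    rw [impactIntegral_comp_mul _ ha hs, mul_max_mul_rpow (by positivity), hfactor,
      hr_eq 1 one_pos _ (by positivity)]
    rfl
  exact eqOn_of_eq_impactIntegral hα1 (locallyLipschitz_mul_max_rpow hc.le hβ.le)
    (hr_cont γ hγ) hscaled_cont (hr_eq γ hγ) hscaled ht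

/-- Self-similarity of the solution of the impact Volterra equation with
power-law nonlinearity `H(x) = c x₊^β` and constant profile `f ≡ 1`:
`r_γ(t) = γ r₁(γ^{−υ} t)` with `υ = (1−β)/(β(1−α))`. -/
theorem stmt_14
    (α lam κ β c : ℝ) (hα0 : 0 < α) (hα1 : α < 1) (hlam : 0 < lam)
    (hκ : 0 < κ) (hβ : 1 < β) (hc : 0 < c)
    (υ : ℝ) (hυ : υ = (1 - β) / (β * (1 - α)))
    (H : ℝ → ℝ) (hH : ∀ x : ℝ, H x = if 0 ≤ x then c * x ^ β else 0)
    (r : ℝ → ℝ → ℝ)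
    (hr_cont : ∀ γ, 0 < γ → ContinuousOn (r γ) (Ici 0))
    (hr_eq : ∀ γ, 0 < γ → ∀ t, 0 ≤ t →
      r γ t = H (κ * ∫ s in (0:ℝ)..t, lam⁻¹ * (t - s) ^ (-α) * (γ - r γ s))) :
    ∀ γ, 0 < γ → ∀ t, 0 ≤ t → r γ t = γ * r 1 (γ ^ (-υ) * t) :=
  stmt_14_general α lam κ β c hα1 hβ hc υ hυ H hH r hr_cont hr_eq
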